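/- arXiv:2112.11313 — 4 statements merged into one kernel-verified Lean document; each statement's English description precedes it below -/
import Mathlib

section
/- Let h : ℝⁿ → Bool be the linear classifier h(x) = (⟨w, x⟩ ≥ b), and suppose features are independently manipulable (so a recourse action a(x) = x + θ maps x to x + θ). Let c(θ) be a cost function that is strictly convex in θ with unique minimum at θ = 0, and suppose the feasible set F is star-shaped: θ ∈ F implies tθ ∈ F for all 0 < t < 1. If θ* is a minimum-cost valid recourse action for x (i.e., ⟨w, x + θ*⟩ ≥ b, θ* ∈ F, and c(θ*) ≤ c(θ) for all valid feasible θ) with θ* ≠ 0, then for every ε > 0 there exists a perturbation Δ with ‖Δ‖ ≤ ε such that ⟨w, (x + Δ) + θ*⟩ < b, i.e., the action θ* fails to be valid for some point in the ε-ball around x. -/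
/-!
A minimum-cost valid action `θ*` cannot push the classifier's score `⟪w, x + θ*⟫` strictly
above `b`: otherwise, by continuity, a slightly shrunk action `t • θ*` with `t < 1` is still
valid and feasible (star-shapedness), and it is strictly cheaper since `c` is convex with
`c 0 < c θ*`. An action that only just reaches the threshold is then defeated by moving `x`
a distance `ε` against `w`.
-/

open Set Filter Topology
open scoped RealInnerProductSpace

lemma ConvexOn.apply_smul_lt {E : Type*} [AddCommGroup E] [Module ℝ E] {c : E → ℝ}
    (hc : ConvexOn ℝ univ c) {θ : E} (hθ : c 0 < c θ) {t : ℝ} (ht₀ : 0 ≤ t) (ht₁ : t < 1) :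
    c (t • θ) < c θ := by
  have hseg := hc.2 (mem_univ 0) (mem_univ θ) (by linarith : 0 ≤ 1 - t) ht₀ (by ring)
  rw [smul_zero, zero_add, smul_eq_mul, smul_eq_mul] at hseg
  nlinarith

lemma exists_smul_lt_one_of_lt {E : Type*} [AddCommGroup E] [Module ℝ E] {g : E → ℝ} {θ : E}
    {b : ℝ} (hg : ContinuousAt (fun t : ℝ => g (t • θ)) 1) (hb : b < g θ) :
    ∃ t : ℝ, t ∈ Ioo 0 1 ∧ b < g (t • θ) := by
  have hnear : ∀ᶠ t : ℝ in 𝓝 1, b < g (t • θ) :=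
    hg.eventually (lt_mem_nhds (by simpa only [one_smul] using hb))
  have hbelow : ∀ᶠ t : ℝ in 𝓝[<] 1, t ∈ Ioo 0 1 := Ioo_mem_nhdsLT one_pos
  exact (hbelow.and (nhdsWithin_le_nhds hnear)).exists

lemma le_of_minimizes_convex_cost {E : Type*} [AddCommGroup E] [Module ℝ E] {c g : E → ℝ}
    {F : Set E} {θ : E} {b : ℝ} (hc : ConvexOn ℝ univ c) (hcθ : c 0 < c θ)
    (hg : ContinuousAt (fun t : ℝ => g (t • θ)) 1)
    (hF : ∀ φ ∈ F, ∀ t : ℝ, 0 < t → t < 1 → t • φ ∈ F) (hθ : θ ∈ F)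
    (hopt : ∀ φ ∈ F, b ≤ g φ → c θ ≤ c φ) :
    g θ ≤ b := by
  by_contra! hb
  obtain ⟨t, ⟨ht₀, ht₁⟩, hbt⟩ := exists_smul_lt_one_of_lt hg hb
  exact (hc.apply_smul_lt hcθ ht₀.le ht₁).not_ge (hopt _ (hF θ hθ t ht₀ ht₁) hbt.le)

lemma exists_norm_le_inner_add_lt {E : Type*} [NormedAddCommGroup E] [InnerProductSpace ℝ E]
    {w y : E} {b ε : ℝ} (hw : w ≠ 0) (hy : ⟪w, y⟫ ≤ b) (hε : 0 < ε) :
    ∃ Δ : E, ‖Δ‖ ≤ ε ∧ ⟪w, y + Δ⟫ < b := by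
  have hw' : 0 < ‖w‖ := norm_pos_iff.mpr hw
  refine ⟨-((ε / ‖w‖) • w), ?_, ?_⟩
  · rw [norm_neg, norm_smul, Real.norm_eq_abs, abs_of_pos (by positivity),
      div_mul_cancel₀ _ hw'.ne']
  · rw [inner_add_right, inner_neg_right, real_inner_smul_right, real_inner_self_eq_norm_sq]
    have : 0 < ε / ‖w‖ * ‖w‖ ^ 2 := by positivity
    linarith

theorem fragility_of_min_cost_recourse_general
    {n : ℕ} (w x θstar : EuclideanSpace ℝ (Fin n)) (b : ℝ)
    (hw : w ≠ 0)
    (c : EuclideanSpace ℝ (Fin n) → ℝ)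
    (F : Set (EuclideanSpace ℝ (Fin n)))
    (hconv : StrictConvexOn ℝ Set.univ c)
    (hmin : ∀ θ : EuclideanSpace ℝ (Fin n), θ ≠ 0 → c 0 < c θ)
    (hstar : ∀ θ ∈ F, ∀ t : ℝ, 0 < t → t < 1 → t • θ ∈ F)
    (hfeas : θstar ∈ F)
    (hopt : ∀ θ ∈ F, b ≤ ⟪w, x + θ⟫ → c θstar ≤ c θ)
    (hne : θstar ≠ 0) :
    ∀ ε : ℝ, 0 < ε →
      ∃ Δ : EuclideanSpace ℝ (Fin n), ‖Δ‖ ≤ ε ∧ ⟪w, (x + Δ) + θstar⟫ < b := by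
  intro ε hε
  have hcont : ContinuousAt (fun t : ℝ => ⟪w, x + t • θstar⟫) 1 := by fun_prop
  have hactive : ⟪w, x + θstar⟫ ≤ b :=
    le_of_minimizes_convex_cost (g := fun θ => ⟪w, x + θ⟫) hconv.convexOn (hmin θstar hne)
      hcont hstar hfeas hopt
  simpa only [add_right_comm x] using exists_norm_le_inner_add_lt hw hactive hε

/-- Minimum-cost recourse for a linear classifier (IMF setting) is fragile to
arbitrarily small perturbations of the individual. -/
theorem fragility_of_min_cost_recourse
    {n : ℕ} (w x θstar : EuclideanSpace ℝ (Fin n)) (b : ℝ)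
    (hw : w ≠ 0)
    (c : EuclideanSpace ℝ (Fin n) → ℝ)
    (F : Set (EuclideanSpace ℝ (Fin n)))
    (hconv : StrictConvexOn ℝ Set.univ c)
    (hmin : ∀ θ : EuclideanSpace ℝ (Fin n), θ ≠ 0 → c 0 < c θ)
    (hstar : ∀ θ ∈ F, ∀ t : ℝ, 0 < t → t < 1 → t • θ ∈ F)
    (hvalid : b ≤ ⟪w, x + θstar⟫)
    (hfeas : θstar ∈ F)
    (hopt : ∀ θ ∈ F, b ≤ ⟪w, x + θ⟫ → c θstar ≤ c θ)
    (hne : θstar ≠ 0) :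
    ∀ ε : ℝ, 0 < ε →
      ∃ Δ : EuclideanSpace ℝ (Fin n), ‖Δ‖ ≤ ε ∧ ⟪w, (x + Δ) + θstar⟫ < b :=
  fragility_of_min_cost_recourse_general w x θstar b hw c F hconv hmin hstar hfeas hopt hne
end

section
/- Let h(x) = (⟨w, x⟩ ≥ b) be a linear classifier on ℝⁿ, let S : ℝⁿ → ℝⁿ be a linear bijection (linear SCM), and let counterfactuals be CF(x, Δ) = S(S⁻¹(x) + Δ). Fix ε > 0 and the uncertainty set B(x) = {CF(x, Δ) : ‖Δ‖₂ ≤ ε}. Then min over x' ∈ B(x) of ⟨w, x' + v⟩ equals ⟨w, x + v⟩ − ε‖Sᵀw‖₂ for any fixed v ∈ ℝⁿ. Consequently, ⟨w, CF(x', a)⟩ ≥ b for all x' ∈ B(x) iff ⟨w, CF(x, a)⟩ ≥ b + ε‖J^T w‖₂, where J is the linear Jacobian of the interventional mapping. -/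
/-!
Because `S` is linear, `⟪w, CF x Δ⟫ = ⟪w, x⟫ + ⟪Sᵀ w, Δ⟫` is affine in `Δ`, and likewise
`⟪w, CFa (CF x Δ)⟫ = ⟪w, CFa x⟫ + ⟪Jᵀ w, Δ⟫`. By Cauchy–Schwarz an affine function
`c + ⟪u, Δ⟫` attains its minimum `c - ε‖u‖` over the ball `‖Δ‖ ≤ ε`, at `Δ = -(ε / ‖u‖) • u`.
-/

open scoped RealInnerProductSpace

section InnerProductSpace

variable {E : Type*} [NormedAddCommGroup E] [InnerProductSpace ℝ E]

theorem isLeast_affine_closedBall {f : E → ℝ} {c : ℝ} {u : E} (hf : ∀ Δ, f Δ = c + ⟪u, Δ⟫)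
    {ε : ℝ} (hε : 0 ≤ ε) :
    IsLeast {r : ℝ | ∃ Δ : E, ‖Δ‖ ≤ ε ∧ r = f Δ} (c - ε * ‖u‖) := by
  constructor
  · -- for `u = 0` the witness is `0`, because `‖0‖⁻¹ = 0`
    refine ⟨-(ε * ‖u‖⁻¹) • u, ?_, ?_⟩
    · rw [norm_smul, norm_neg, Real.norm_of_nonneg (by positivity), mul_assoc]
      exact mul_le_of_le_one_right hε (inv_mul_le_one_of_le₀ le_rfl (norm_nonneg u))
    · rw [hf, inner_smul_right, real_inner_self_eq_norm_sq, sq, neg_mul, mul_assoc,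
        ← mul_assoc ‖u‖⁻¹, inv_mul_mul_self, sub_eq_add_neg]
  · rintro r ⟨Δ, hΔ, rfl⟩
    have hcs : -⟪u, Δ⟫ ≤ ‖u‖ * ε :=
      (neg_le_abs _).trans <| (abs_real_inner_le_norm u Δ).trans <|
        mul_le_mul_of_nonneg_left hΔ (norm_nonneg u)
    rw [hf]
    linarith

variable [FiniteDimensional ℝ E]

theorem inner_map_add_eq_add_inner_adjoint (A : E →ₗ[ℝ] E) (w y Δ : E) :
    ⟪w, A (y + Δ)⟫ = ⟪w, A y⟫ + ⟪LinearMap.adjoint A w, Δ⟫ := by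
  rw [map_add, inner_add_right, LinearMap.adjoint_inner_left]

end InnerProductSpace

/-- Proposition 4 (linear case): the worst-case classifier score over the counterfactual
uncertainty set, and the resulting robust recourse characterization via the shifted
threshold `b + ε‖Jᵀw‖₂` where `J = S^a` is the Jacobian of the interventional map. -/
theorem robust_recourse_linear_SCM
    {n : ℕ} (w x v : EuclideanSpace ℝ (Fin n)) (b ε : ℝ) (hε : 0 < ε)
    (S : EuclideanSpace ℝ (Fin n) ≃ₗ[ℝ] EuclideanSpace ℝ (Fin n))
    (Sa : EuclideanSpace ℝ (Fin n) →ₗ[ℝ] EuclideanSpace ℝ (Fin n))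
    (CF : EuclideanSpace ℝ (Fin n) → EuclideanSpace ℝ (Fin n) → EuclideanSpace ℝ (Fin n))
    (hCF : ∀ y Δ, CF y Δ = S (S.symm y + Δ))
    (CFa : EuclideanSpace ℝ (Fin n) → EuclideanSpace ℝ (Fin n))
    (hCFa : ∀ y, CFa y = Sa (S.symm y)) :
    sInf {r : ℝ | ∃ Δ : EuclideanSpace ℝ (Fin n), ‖Δ‖ ≤ ε ∧ r = ⟪w, CF x Δ + v⟫} =
        ⟪w, x + v⟫ - ε * ‖(LinearMap.adjoint S.toLinearMap) w‖ ∧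
    ((∀ Δ : EuclideanSpace ℝ (Fin n), ‖Δ‖ ≤ ε → b ≤ ⟪w, CFa (CF x Δ)⟫) ↔
        b + ε * ‖(LinearMap.adjoint Sa) w‖ ≤ ⟪w, CFa x⟫) := by
  have hscore : ∀ Δ, ⟪w, CF x Δ + v⟫ = ⟪w, x + v⟫ + ⟪LinearMap.adjoint S.toLinearMap w, Δ⟫ :=
    fun Δ => by
      rw [hCF, inner_add_right, inner_add_right, ← LinearEquiv.coe_coe,
        inner_map_add_eq_add_inner_adjoint, LinearEquiv.coe_coe, S.apply_symm_apply]
      ring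
  have hscore_a : ∀ Δ, ⟪w, CFa (CF x Δ)⟫ = ⟪w, CFa x⟫ + ⟪LinearMap.adjoint Sa w, Δ⟫ :=
    fun Δ => by
      rw [hCF, hCFa, hCFa, S.symm_apply_apply, inner_map_add_eq_add_inner_adjoint]
  refine ⟨(isLeast_affine_closedBall hscore hε.le).csInf_eq, ?_⟩
  rw [← le_sub_iff_add_le, le_isGLB_iff (isLeast_affine_closedBall hscore_a hε.le).isGLB]
  exact ⟨fun h r ⟨Δ, hΔ, hr⟩ => hr ▸ h Δ hΔ, fun h Δ hΔ => h ⟨Δ, hΔ, rfl⟩⟩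
end

section
/- Let S : ℝⁿ → ℝⁿ be a linear bijection (linear SCM with counterfactuals CF(x, Δ) = S(S⁻¹(x) + Δ)), h : ℝⁿ → Bool a classifier, ε > 0, and B(x) = {CF(x, Δ) : ‖Δ‖ ≤ ε}. Suppose there exists x⁺ ∈ ℝⁿ such that h(x') = 1 for all x' ∈ B(x⁺), and suppose all features are actionable so that for any x the action a(x) = do(X = x + (x⁺ − x)) is feasible, with CF(x', a) = x' + (x⁺ − x). Then for every x ∈ ℝⁿ, the action a is adversarially robust: h(CF(x', a)) = 1 for all x' ∈ B(x). -/
theorem LinearEquiv.apply_symm_add_add_sub {R M : Type*} [Semiring R] [AddCommGroup M]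
    [Module R M] (S : M ≃ₗ[R] M) (x y Δ : M) :
    S (S.symm x + Δ) + (y - x) = S (S.symm y + Δ) := by
  simp only [map_add, S.apply_symm_apply]
  abel

theorem robust_recourse_exists_of_robust_point_general
    {n : ℕ} (S : EuclideanSpace ℝ (Fin n) ≃ₗ[ℝ] EuclideanSpace ℝ (Fin n))
    (h : EuclideanSpace ℝ (Fin n) → Bool) (ε : ℝ)
    (B : EuclideanSpace ℝ (Fin n) → Set (EuclideanSpace ℝ (Fin n)))
    (hB : ∀ x, B x = {y | ∃ Δ : EuclideanSpace ℝ (Fin n), ‖Δ‖ ≤ ε ∧ y = S (S.symm x + Δ)})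
    (xplus : EuclideanSpace ℝ (Fin n))
    (hxplus : ∀ x' ∈ B xplus, h x' = true) :
    ∀ x : EuclideanSpace ℝ (Fin n),
      ∀ x' ∈ B x, h (x' + (xplus - x)) = true := by
  intro x x' hx'
  rw [hB] at hx'
  obtain ⟨Δ, hΔ, rfl⟩ := hx'
  apply hxplus
  rw [hB]
  exact ⟨Δ, hΔ, S.apply_symm_add_add_sub x xplus Δ⟩

/-- Proposition 2: for a linear SCM, if all features are actionable and some individual
`x⁺` is robustly classified, then every individual has an adversarially robust recourse
action, namely `do(X = x + (x⁺ - x))`. -/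
theorem robust_recourse_exists_of_robust_point
    {n : ℕ} (S : EuclideanSpace ℝ (Fin n) ≃ₗ[ℝ] EuclideanSpace ℝ (Fin n))
    (h : EuclideanSpace ℝ (Fin n) → Bool) (ε : ℝ) (hε : 0 < ε)
    (B : EuclideanSpace ℝ (Fin n) → Set (EuclideanSpace ℝ (Fin n)))
    (hB : ∀ x, B x = {y | ∃ Δ : EuclideanSpace ℝ (Fin n), ‖Δ‖ ≤ ε ∧ y = S (S.symm x + Δ)})
    (xplus : EuclideanSpace ℝ (Fin n))
    (hxplus : ∀ x' ∈ B xplus, h x' = true) :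
    ∀ x : EuclideanSpace ℝ (Fin n),
      ∀ x' ∈ B x, h (x' + (xplus - x)) = true :=
  robust_recourse_exists_of_robust_point_general S h ε B hB xplus hxplus
end

section
/- Let h(x) = (⟨w, x⟩ ≥ b) be a linear classifier and suppose the IMF assumption holds. Let x be negatively classified and θ a valid recourse action: ⟨w, x + θ⟩ ≥ b, with ⟨w, θ⟩ > 0. Set β = ε‖w‖₂ / ⟨w, θ⟩. Then the scaled action (1 + β)θ is adversarially robust against the uncertainty set {x + Δ : ‖Δ‖₂ ≤ ε}, i.e., ⟨w, x + Δ + (1+β)θ⟩ ≥ b for all ‖Δ‖₂ ≤ ε. -/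
/-! By Cauchy–Schwarz a perturbation `Δ` with `‖Δ‖ ≤ ε` lowers `⟪w, ·⟫` by at most `ε‖w‖`,
and the extra `β • θ` raises it by exactly `β⟪w, θ⟫ = ε‖w‖`. -/

open scoped RealInnerProductSpace

section

variable {E : Type*} [NormedAddCommGroup E] [InnerProductSpace ℝ E]

theorem neg_mul_norm_le_real_inner_of_norm_le (w : E) {Δ : E} {ε : ℝ} (hΔ : ‖Δ‖ ≤ ε) :
    -(ε * ‖w‖) ≤ ⟪w, Δ⟫ :=
  calc -(ε * ‖w‖) ≤ -(‖w‖ * ‖Δ‖) := by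
        rw [mul_comm ε]; exact neg_le_neg (mul_le_mul_of_nonneg_left hΔ (norm_nonneg w))
    _ ≤ ⟪w, Δ⟫ := neg_le_of_abs_le (abs_real_inner_le_norm w Δ)

theorem le_real_inner_add_of_margin {w y Δ : E} {b ε : ℝ}
    (hmargin : b + ε * ‖w‖ ≤ ⟪w, y⟫) (hΔ : ‖Δ‖ ≤ ε) : b ≤ ⟪w, y + Δ⟫ := by
  rw [inner_add_right]
  linarith [neg_mul_norm_le_real_inner_of_norm_le w hΔ]

theorem real_inner_add_smul_eq_add_of_ne_zero {w x θ : E} (hθ : ⟪w, θ⟫ ≠ 0) (c : ℝ) :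
    ⟪w, x + (1 + c / ⟪w, θ⟫) • θ⟫ = ⟪w, x + θ⟫ + c := by
  rw [add_smul, one_smul, ← add_assoc, inner_add_right, inner_smul_right,
    div_mul_cancel₀ c hθ]

end

theorem scaled_action_is_robust_general
    {n : ℕ} (w x θ : EuclideanSpace ℝ (Fin n)) (b ε : ℝ)
    (hvalid : b ≤ ⟪w, x + θ⟫) (hpos : 0 < ⟪w, θ⟫) :
    ∀ Δ : EuclideanSpace ℝ (Fin n), ‖Δ‖ ≤ ε →
      b ≤ ⟪w, x + Δ + (1 + ε * ‖w‖ / ⟪w, θ⟫) • θ⟫ := by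
  intro Δ hΔ
  have hmargin : b + ε * ‖w‖ ≤ ⟪w, x + (1 + ε * ‖w‖ / ⟪w, θ⟫) • θ⟫ := by
    rw [real_inner_add_smul_eq_add_of_ne_zero hpos.ne']
    linarith
  rw [add_right_comm]
  exact le_real_inner_add_of_margin hmargin hΔ

/-- Scaling argument: if `θ` is a valid recourse action with `⟪w, θ⟫ > 0`, then the
scaled action `(1 + β)θ` with `β = ε‖w‖₂/⟪w, θ⟫` is adversarially robust against
Euclidean `ε`-perturbations of the individual. -/
theorem scaled_action_is_robust
    {n : ℕ} (w x θ : EuclideanSpace ℝ (Fin n)) (b ε : ℝ) (hε : 0 ≤ ε)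
    (hvalid : b ≤ ⟪w, x + θ⟫) (hpos : 0 < ⟪w, θ⟫) :
    ∀ Δ : EuclideanSpace ℝ (Fin n), ‖Δ‖ ≤ ε →
      b ≤ ⟪w, x + Δ + (1 + ε * ‖w‖ / ⟪w, θ⟫) • θ⟫ :=
  scaled_action_is_robust_general w x θ b ε hvalid hpos
end
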